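/- (Strict passivity ↔ strict contraction) Let G : S_e^n → S_e^n with I + G invertible, S = (G - I)(I + G)⁻¹. The following are equivalent: (i) there exists δ₁ > 0 with ⟨x, Gx⟩_T ≥ δ₁‖x‖_T² for all x, T, and γ⁰(G) < ∞; (ii) γ⁰(S) < 1. -/

import Mathlib

noncomputable section

variable {E : Type*} [NormedAddCommGroup E] [InnerProductSpace ℝ E]

/-- Truncation operator `P_T`. -/
def trunc (T : ℤ) (x : ℤ → E) : ℤ → E := fun t => if t ≤ T then x t else 0

/-- Membership in the extended signal space `S_e^n`: left-bounded support. -/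
def SeP (x : ℤ → E) : Prop := ∃ a : ℤ, ∀ t, t < a → x t = 0

/-- Truncated inner product. -/
def innerT (T : ℤ) (x y : ℤ → E) : ℝ := ∑' t : ℤ, (inner ℝ (trunc T x t) (trunc T y t) : ℝ)

/-- Truncated norm `‖x‖_T`. -/
def normT (T : ℤ) (x : ℤ → E) : ℝ := Real.sqrt (innerT T x x)

/-- Membership in `S^n`: an extended-space signal with uniformly bounded truncated norms. -/
def memS (x : ℤ → E) : Prop := SeP x ∧ ∃ M : ℝ, ∀ T : ℤ, normT T x ≤ M

/-- The action of `ρ > 0` on signals: `(ρ ∘ x)(t) = ρᵗ x(t)`. -/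
def rhoAct (ρ : ℝ) (x : ℤ → E) : ℤ → E := fun t => ρ ^ t • x t

/-- The direct-chain operator `ρ⁻¹ ∘ H₁ ∘ ρ`. -/
def dirOp (ρ : ℝ) (H1 : (ℤ → E) → (ℤ → E)) : (ℤ → E) → (ℤ → E) :=
  fun x => rhoAct ρ⁻¹ (H1 (rhoAct ρ x))

/-- The feedback-chain operator `ρ ∘ H₂ ∘ ρ⁻¹`. -/
def fbOp (ρ : ℝ) (H2 : (ℤ → E) → (ℤ → E)) : (ℤ → E) → (ℤ → E) :=
  fun x => rhoAct ρ (H2 (rhoAct ρ⁻¹ x))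

/-- The set whose infimum is the unbiased gain `γ⁰(H)`. -/
def gainSet (H : (ℤ → E) → (ℤ → E)) : Set ℝ :=
  {δ : ℝ | 0 ≤ δ ∧ ∀ x, SeP x → ∀ T : ℤ, normT T (H x) ≤ δ * normT T x}

/-- The set whose infimum is the biased gain `γ(H)`. -/
def gainSetB (H : (ℤ → E) → (ℤ → E)) : Set ℝ :=
  {δ : ℝ | 0 ≤ δ ∧ ∃ β : ℝ, ∀ x, SeP x → ∀ T : ℤ, normT T (H x) ≤ δ * normT T x + β}

/-- Causality: `P_T ∘ H = P_T ∘ H ∘ P_T`. -/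
def Causal (H : (ℤ → E) → (ℤ → E)) : Prop :=
  ∀ (T : ℤ) (x : ℤ → E), trunc T (H (trunc T x)) = trunc T (H x)

/-! Write `u = x + G x`, so that `S u = G x - x` and `‖S u‖_T² = ‖u‖_T² - 4⟨x, G x⟩_T`. On a
window `[a, T]` below which `x` and `G x` vanish, the truncated quantities are those of two vectors
`v, w` of `ℓ²`, and the equivalence becomes a pair of inequalities in an inner product space:
`δ‖v‖² ≤ ⟨v, w⟩` and `‖w‖ ≤ γ‖v‖` give `‖w - v‖² ≤ (1 - 4δ/(1+γ)²)‖v + w‖²`; conversely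
`‖w - v‖ ≤ k‖v + w‖` with `k < 1` gives `⟨v, w⟩ ≥ (1-k²)/(2(1+k²))‖v‖²` and
`‖w‖ ≤ (1+k)/(1-k)‖v‖`. -/

lemma norm_le_of_norm_sub_le {F : Type*} [SeminormedAddCommGroup F] {v w : F} {k : ℝ}
    (hk0 : 0 ≤ k) (hk1 : k < 1) (h : ‖w - v‖ ≤ k * ‖v + w‖) :
    ‖w‖ ≤ (1 + k) / (1 - k) * ‖v‖ := by
  have : ‖w‖ - ‖v‖ ≤ k * (‖v‖ + ‖w‖) :=
    (norm_sub_norm_le w v).trans (h.trans (by gcongr; exact norm_add_le v w))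
  rw [div_mul_eq_mul_div, le_div_iff₀ (by linarith)]
  linarith

section CayleyPair

variable {F : Type*} [NormedAddCommGroup F] [InnerProductSpace ℝ F] {v w : F} {k : ℝ}

lemma norm_sub_sq_eq_norm_add_sq_sub_inner (v w : F) :
    ‖w - v‖ ^ 2 = ‖v + w‖ ^ 2 - 4 * inner ℝ v w := by
  rw [norm_sub_sq_real, norm_add_sq_real, real_inner_comm]
  ring

lemma norm_sub_le_mul_norm_add_of_inner_ge {δ γ : ℝ} (hδ : 0 ≤ δ) (hγ : 0 ≤ γ)
    (hinner : δ * ‖v‖ ^ 2 ≤ inner ℝ v w) (hw : ‖w‖ ≤ γ * ‖v‖) (hk : 0 ≤ k)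
    (hk_sq : 1 - 4 * δ / (1 + γ) ^ 2 ≤ k ^ 2) :
    ‖w - v‖ ≤ k * ‖v + w‖ := by
  have hsum : ‖v + w‖ ≤ (1 + γ) * ‖v‖ := (norm_add_le v w).trans (by linarith)
  have hsum_sq : 4 * δ / (1 + γ) ^ 2 * ‖v + w‖ ^ 2 ≤ 4 * δ * ‖v‖ ^ 2 := by
    rw [div_mul_eq_mul_div, div_le_iff₀ (by positivity)]
    have := pow_le_pow_left₀ (norm_nonneg _) hsum 2
    nlinarith
  rw [← pow_le_pow_iff_left₀ (norm_nonneg _) (by positivity) two_ne_zero,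
    norm_sub_sq_eq_norm_add_sq_sub_inner]
  nlinarith [sq_nonneg ‖v + w‖]

lemma mul_norm_sq_le_inner_of_norm_sub_le (hk0 : 0 ≤ k) (hk1 : k ≤ 1)
    (h : ‖w - v‖ ≤ k * ‖v + w‖) :
    (1 - k ^ 2) / (2 * (1 + k ^ 2)) * ‖v‖ ^ 2 ≤ inner ℝ v w := by
  have h_sq : ‖w - v‖ ^ 2 ≤ k ^ 2 * ‖v + w‖ ^ 2 := by
    rw [← mul_pow]; exact pow_le_pow_left₀ (norm_nonneg _) h 2
  rw [norm_sub_sq_real, norm_add_sq_real, real_inner_comm] at h_sq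
  rw [div_mul_eq_mul_div, div_le_iff₀ (by positivity)]
  have : 0 ≤ (1 - k ^ 2) * ‖w‖ ^ 2 := mul_nonneg (by nlinarith) (sq_nonneg _)
  linarith

end CayleyPair

omit [InnerProductSpace ℝ E] in
lemma SeP.exists_common_bound {x y : ℤ → E} (hx : SeP x) (hy : SeP y) :
    ∃ a : ℤ, (∀ t, t < a → x t = 0) ∧ ∀ t, t < a → y t = 0 := by
  obtain ⟨a, ha⟩ := hx
  obtain ⟨b, hb⟩ := hy
  exact ⟨min a b, fun t ht => ha t (by omega), fun t ht => hb t (by omega)⟩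

omit [InnerProductSpace ℝ E] in
lemma SeP.add {x y : ℤ → E} (hx : SeP x) (hy : SeP y) : SeP (x + y) := by
  obtain ⟨a, hxa, hya⟩ := hx.exists_common_bound hy
  exact ⟨a, fun t ht => by simp [hxa t ht, hya t ht]⟩

def window (a T : ℤ) : (ℤ → E) →ₗ[ℝ] PiLp 2 (fun _ : Finset.Icc a T => E) :=
  (WithLp.linearEquiv 2 ℝ _).symm.toLinearMap ∘ₗ
    LinearMap.funLeft ℝ E ((↑) : Finset.Icc a T → ℤ)

lemma innerT_eq_inner_window {a : ℤ} (T : ℤ) {x : ℤ → E} (y : ℤ → E)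
    (hx : ∀ t, t < a → x t = 0) :
    innerT T x y = inner ℝ (window a T x) (window a T y) := by
  rw [innerT, PiLp.inner_apply, tsum_eq_sum (s := Finset.Icc a T)]
  · exact (Finset.sum_coe_sort (Finset.Icc a T) _).symm.trans
      (Finset.sum_congr rfl fun t _ => by simp [window, trunc, (Finset.mem_Icc.mp t.2).2])
  · intro t ht
    rcases not_and_or.mp (Finset.mem_Icc.not.mp ht) with ht | ht
    · simp [trunc, hx t (not_le.mp ht)]
    · simp [trunc, not_le.mp ht |>.not_ge]

lemma normT_eq_norm_window {a : ℤ} (T : ℤ) {x : ℤ → E} (hx : ∀ t, t < a → x t = 0) :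
    normT T x = ‖window a T x‖ := by
  rw [normT, innerT_eq_inner_window T x hx, real_inner_self_eq_norm_sq,
    Real.sqrt_sq (norm_nonneg _)]

lemma SeP.exists_window {x y : ℤ → E} (hx : SeP x) (hy : SeP y) (T : ℤ) :
    ∃ a : ℤ, innerT T x y = inner ℝ (window a T x) (window a T y) ∧
      normT T x = ‖window a T x‖ ∧ normT T y = ‖window a T y‖ ∧
      normT T (x + y) = ‖window a T x + window a T y‖ ∧
      normT T (y - x) = ‖window a T y - window a T x‖ := by
  obtain ⟨a, hxa, hya⟩ := hx.exists_common_bound hy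
  refine ⟨a, innerT_eq_inner_window T y hxa, normT_eq_norm_window T hxa,
    normT_eq_norm_window T hya, ?_, ?_⟩
  · rw [← map_add]; exact normT_eq_norm_window T fun t ht => by simp [hxa t ht, hya t ht]
  · rw [← map_sub]; exact normT_eq_norm_window T fun t ht => by simp [hxa t ht, hya t ht]

section Truncated

variable {x y : ℤ → E} {k : ℝ} (T : ℤ)

lemma normT_sub_le_mul_normT_add_of_innerT_ge {δ γ : ℝ} (hx : SeP x) (hy : SeP y)
    (hδ : 0 ≤ δ) (hγ : 0 ≤ γ) (hinner : δ * normT T x ^ 2 ≤ innerT T x y)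
    (hy_le : normT T y ≤ γ * normT T x) (hk : 0 ≤ k)
    (hk_sq : 1 - 4 * δ / (1 + γ) ^ 2 ≤ k ^ 2) :
    normT T (y - x) ≤ k * normT T (x + y) := by
  obtain ⟨a, hP, hA, hB, hU, hD⟩ := hx.exists_window hy T
  rw [hP, hA] at hinner
  rw [hA, hB] at hy_le
  rw [hU, hD]
  exact norm_sub_le_mul_norm_add_of_inner_ge hδ hγ hinner hy_le hk hk_sq

lemma mul_normT_sq_le_innerT_of_normT_sub_le (hx : SeP x) (hy : SeP y) (hk0 : 0 ≤ k)
    (hk1 : k ≤ 1) (h : normT T (y - x) ≤ k * normT T (x + y)) :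
    (1 - k ^ 2) / (2 * (1 + k ^ 2)) * normT T x ^ 2 ≤ innerT T x y := by
  obtain ⟨a, hP, hA, -, hU, hD⟩ := hx.exists_window hy T
  rw [hU, hD] at h
  rw [hP, hA]
  exact mul_norm_sq_le_inner_of_norm_sub_le hk0 hk1 h

lemma normT_le_of_normT_sub_le (hx : SeP x) (hy : SeP y) (hk0 : 0 ≤ k) (hk1 : k < 1)
    (h : normT T (y - x) ≤ k * normT T (x + y)) :
    normT T y ≤ (1 + k) / (1 - k) * normT T x := by
  obtain ⟨a, -, hA, hB, hU, hD⟩ := hx.exists_window hy T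
  rw [hU, hD] at h
  rw [hA, hB]
  exact norm_le_of_norm_sub_le hk0 hk1 h

end Truncated

lemma gainSet_nonempty_and_sInf_lt_iff (H : (ℤ → E) → (ℤ → E)) (c : ℝ) :
    (gainSet H).Nonempty ∧ sInf (gainSet H) < c ↔ ∃ k ∈ gainSet H, k < c := by
  constructor
  · rintro ⟨hne, hlt⟩
    exact exists_lt_of_csInf_lt hne hlt
  · rintro ⟨k, hk, hkc⟩
    exact ⟨⟨k, hk⟩, (csInf_le ⟨0, fun _ hδ => hδ.1⟩ hk).trans_lt hkc⟩

lemma mem_gainSet_cayley_iff {G Ginv : (ℤ → E) → (ℤ → E)}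
    (hmapG : ∀ x, SeP x → SeP (G x)) (hmapGinv : ∀ x, SeP x → SeP (Ginv x))
    (hleft : Function.LeftInverse Ginv (fun x => x + G x))
    (hright : Function.RightInverse Ginv (fun x => x + G x)) (k : ℝ) :
    k ∈ gainSet (fun u => G (Ginv u) - Ginv u) ↔
      0 ≤ k ∧ ∀ x, SeP x → ∀ T : ℤ, normT T (G x - x) ≤ k * normT T (x + G x) := by
  refine and_congr_right fun _ => ⟨fun h x hx T => ?_, fun h u hu T => ?_⟩
  · simpa only [hleft x] using h (x + G x) (hx.add (hmapG x hx)) T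
  · simpa only [hright u] using h (Ginv u) (hmapGinv u hu) T

theorem stmt15_general (G Ginv : (ℤ → E) → (ℤ → E))
    (hmapG : ∀ x, SeP x → SeP (G x)) (hmapGinv : ∀ x, SeP x → SeP (Ginv x))
    (hleft : Function.LeftInverse Ginv (fun x => x + G x))
    (hright : Function.RightInverse Ginv (fun x => x + G x)) :
    ((∃ δ1 : ℝ, 0 < δ1 ∧ ∀ x, SeP x → ∀ T : ℤ,
        innerT T x (G x) ≥ δ1 * normT T x ^ 2) ∧ (gainSet G).Nonempty) ↔
    ((gainSet (fun x => G (Ginv x) - Ginv x)).Nonempty ∧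
      sInf (gainSet (fun x => G (Ginv x) - Ginv x)) < 1) := by
  simp only [gainSet_nonempty_and_sInf_lt_iff, mem_gainSet_cayley_iff hmapG hmapGinv hleft hright]
  constructor
  · rintro ⟨⟨δ, hδ, hpass⟩, γ, hγ, hgain⟩
    have hc : 0 < 4 * δ / (1 + γ) ^ 2 := by positivity
    set c := max 0 (1 - 4 * δ / (1 + γ) ^ 2)
    refine ⟨√c, ⟨Real.sqrt_nonneg c, fun x hx T => ?_⟩, ?_⟩
    · refine normT_sub_le_mul_normT_add_of_innerT_ge T hx (hmapG x hx) hδ.le hγ (hpass x hx T)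
        (hgain x hx T) (Real.sqrt_nonneg c) ?_
      rw [Real.sq_sqrt (le_max_left _ _)]
      exact le_max_right _ _
    · rw [Real.sqrt_lt' one_pos, one_pow]
      exact max_lt one_pos (by linarith)
  · rintro ⟨k, ⟨hk0, hS⟩, hk1⟩
    refine ⟨⟨(1 - k ^ 2) / (2 * (1 + k ^ 2)), div_pos (by nlinarith) (by positivity),
      fun x hx T => ?_⟩, (1 + k) / (1 - k), div_nonneg (by linarith) (by linarith),
      fun x hx T => ?_⟩
    · exact mul_normT_sq_le_innerT_of_normT_sub_le T hx (hmapG x hx) hk0 hk1.le (hS x hx T)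
    · exact normT_le_of_normT_sub_le T hx (hmapG x hx) hk0 hk1 (hS x hx T)

/-- (Strict passivity ↔ strict contraction; loop-transformation lemma) Let `G` be
causal with `I + G` invertible and `S = (G - I)(I + G)⁻¹`, i.e.
`S x = G(Ginv x) - Ginv x`. The following are equivalent:
(i) there is `δ₁ > 0` with `⟨x, Gx⟩_T ≥ δ₁‖x‖_T²` for all `x, T`, and `γ⁰(G) < ∞`;
(ii) `γ⁰(S) < 1`. -/
theorem stmt15 (G Ginv : (ℤ → E) → (ℤ → E))
    (hcaus : Causal G)
    (hmapG : ∀ x, SeP x → SeP (G x)) (hmapGinv : ∀ x, SeP x → SeP (Ginv x))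
    (hleft : Function.LeftInverse Ginv (fun x => x + G x))
    (hright : Function.RightInverse Ginv (fun x => x + G x)) :
    ((∃ δ1 : ℝ, 0 < δ1 ∧ ∀ x, SeP x → ∀ T : ℤ,
        innerT T x (G x) ≥ δ1 * normT T x ^ 2) ∧ (gainSet G).Nonempty) ↔
    ((gainSet (fun x => G (Ginv x) - Ginv x)).Nonempty ∧
      sInf (gainSet (fun x => G (Ginv x) - Ginv x)) < 1) :=
  stmt15_general G Ginv hmapG hmapGinv hleft hright
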